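/- Let (p,p') be a pair of coprime positive integers with p ≥ 2, set a = p'/p and λ_{r,s} = (r−1)/2 − sp/(2p'), let ε,ε' ∈ {0,1}, and let r,s,θ,m be integers with 1 ≤ r ≤ p−1, 0 ≤ s ≤ p'−1, θ ∈ ℤ and 0 ≤ m ≤ 2p'−1. Then for all u ∈ ℂ and τ ∈ ℍ, h( (u−θ−(1−ε)/2)/p − (−rp'+sp−pm+pp')/(2pp') − (ε'p'−1/2)·τ/(2pp'); τ/(2pp') ) = 2p' e^{2πi(θ+(1−ε)/2)(ε'a−1/(2p))} e^{−πiε'(ar−s+m)} e^{−πi(−rp'+sp−pm)/(2pp')} e^{2πiτ(2ε'p'−1)²/(16pp')} e^{2πiu(−ε'a+1/(2p))} · ∫_{ℝ−i(ε'/2−1/(4p'))} [ e^{2π( p'−m−2a(λ_{r,s}−θ+ε/2) )y} / sinh(2p'πy) ] e^{2πiaτy²} e^{−4πauy} dy, where the contour integral means ∫_ℝ f( x − i(ε'/2 − 1/(4p')) ) dx and converges absolutely (the integrand has no poles on this contour). -/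

import Mathlib

/-!
Substituting `x = 2p'y` in the Mordell integral turns `cosh (2p'πy)` into `sinh (2p'π(y - iδ))`
with `δ = ε'/2 - 1/(4p')`, because `2p'πδ = π(p'ε' - 1/2)` and a shift by an odd multiple of `πi/2`
exchanges `cosh` and `sinh` up to the unimodular factor `exp (πi/2 - πip'ε')`. The Gaussian exponent,
rewritten in the shifted variable `y - iδ`, splits into the five constant phases of the statement
and the exponential factors of the integrand. Integrability comes from the Gaussian decay of the
kernel, since `Im τ > 0` and `1/cosh` is bounded.
-/

open Complex MeasureTheory
open scoped Real

noncomputable section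

/-- λ_{r,s} = (r−1)/2 − sp/(2p'). -/
def lam (p p' r s : ℤ) : ℝ := ((r : ℝ) - 1) / 2 - (s : ℝ) * p / (2 * p')

/-- The Mordell integral h(u;τ). -/
def mordellH (u τ : ℂ) : ℂ :=
  ∫ x : ℝ, Complex.exp ((π : ℂ) * Complex.I * τ * (x : ℂ) ^ 2 - 2 * (π : ℂ) * u * (x : ℂ)) /
    (Real.cosh (π * x) : ℂ)

/-- The integrand of the contour integral in the Mordell part of the continuous
contribution. -/
def mordellIntegrand (p p' : ℤ) (ε : ℕ) (r s θ m : ℤ) (u τ : ℂ) (y : ℂ) : ℂ :=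
  Complex.exp (2 * (π : ℂ) * ((p' : ℂ) - m -
      2 * ((p' : ℂ) / p) * ((lam p p' r s : ℂ) - θ + ε / 2)) * y) /
    Complex.sinh (2 * (p' : ℂ) * π * y) *
    Complex.exp (2 * (π : ℂ) * Complex.I * ((p' : ℂ) / p) * τ * y ^ 2) *
    Complex.exp (-4 * (π : ℂ) * ((p' : ℂ) / p) * u * y)

def mordellKernel (u τ : ℂ) (x : ℝ) : ℂ :=
  exp (π * I * τ * x ^ 2 - 2 * π * u * x) / (Real.cosh (π * x) : ℂ)

lemma mordellH_eq_integral_mordellKernel (u τ : ℂ) :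
    mordellH u τ = ∫ x, mordellKernel u τ x := rfl

lemma integrable_mordellKernel (u : ℂ) {τ : ℂ} (hτ : 0 < τ.im) :
    Integrable (mordellKernel u τ) := by
  have hgauss : Integrable fun x : ℝ => exp (-(-(π * I * τ)) * x ^ 2 + (-2 * π * u) * x + 0) :=
    integrable_cexp_quadratic (by simpa using mul_pos Real.pi_pos hτ) _ _
  have hcosh : ∀ x : ℝ, ‖((Real.cosh (π * x) : ℂ))⁻¹‖ ≤ 1 := fun x => by
    rw [norm_inv, Complex.norm_real, Real.norm_of_nonneg (Real.cosh_pos _).le]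
    exact inv_le_one_of_one_le₀ (Real.one_le_cosh _)
  refine (hgauss.bdd_mul (c := 1) ?_ (.of_forall hcosh)).congr (.of_forall fun x => ?_)
  · fun_prop
  · simp only [mordellKernel, div_eq_inv_mul]
    ring_nf

lemma mordellH_eq_mul_integral_comp_mul (u τ : ℂ) {c : ℝ} (hc : 0 < c) :
    mordellH u τ = c * ∫ x, mordellKernel u τ (c * x) := by
  rw [mordellH_eq_integral_mordellKernel, Measure.integral_comp_mul_left, abs_of_pos (inv_pos.2 hc),
    real_smul, ← mul_assoc, ← ofReal_mul, mul_inv_cancel₀ hc.ne', ofReal_one, one_mul]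

lemma sinh_add_of_exp_sq_eq_neg_one (z : ℂ) {d : ℂ} (hd : exp d ^ 2 = -1) :
    sinh (z + d) = exp d * cosh z := by
  have hneg : exp (-d) = -exp d := mul_right_cancel₀ (exp_ne_zero d) <| by
    rw [← exp_add, neg_add_cancel, exp_zero]
    linear_combination hd
  rw [sinh, cosh, exp_add, neg_add, exp_add, hneg]
  ring

lemma mordell_exponent_identity (p p' : ℤ) (hp : (p : ℂ) ≠ 0) (hp' : (p' : ℂ) ≠ 0)
    (ε ε' : ℕ) (r s θ m : ℤ) (u τ x : ℂ) :
    π * I * (τ / (2 * p * p')) * (2 * p' * x) ^ 2 -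
        2 * π * ((u - θ - (1 - (ε : ℂ)) / 2) / p -
          ((-r * p' + s * p - p * m + p * p' : ℤ) : ℂ) / (2 * p * p') -
          ((ε' : ℂ) * p' - 1 / 2) * τ / (2 * p * p')) * (2 * p' * x) =
    2 * π * I * ((θ : ℂ) + (1 - (ε : ℂ)) / 2) * ((ε' : ℂ) * ((p' : ℂ) / p) - 1 / (2 * p)) +
      -π * I * (ε' : ℂ) * (((p' : ℂ) / p) * r - s + m) +
      -π * I * ((-r * p' + s * p - p * m : ℤ) : ℂ) / (2 * p * p') +
      2 * π * I * τ * (2 * (ε' : ℂ) * p' - 1) ^ 2 / (16 * p * p') +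
      2 * π * I * u * (-(ε' : ℂ) * ((p' : ℂ) / p) + 1 / (2 * p)) +
      (2 * π * ((p' : ℂ) - m - 2 * ((p' : ℂ) / p) * ((lam p p' r s : ℂ) - θ + ε / 2)) *
          (x - I * ((ε' : ℂ) / 2 - 1 / (4 * (p' : ℂ)))) +
        2 * π * I * ((p' : ℂ) / p) * τ * (x - I * ((ε' : ℂ) / 2 - 1 / (4 * (p' : ℂ)))) ^ 2 +
        -4 * π * ((p' : ℂ) / p) * u * (x - I * ((ε' : ℂ) / 2 - 1 / (4 * (p' : ℂ))))) -
      (π * I / 2 - π * I * p' * ε') := by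
  simp only [lam]
  push_cast
  field_simp
  ring_nf
  simp only [I_sq, I_pow_three]
  ring

lemma mordellKernel_two_mul_eq (p p' : ℤ) (hp : (p : ℂ) ≠ 0) (hp' : (p' : ℂ) ≠ 0)
    (ε ε' : ℕ) (r s θ m : ℤ) (u τ : ℂ) (x : ℝ) :
    mordellKernel ((u - θ - (1 - (ε : ℂ)) / 2) / p -
          ((-r * p' + s * p - p * m + p * p' : ℤ) : ℂ) / (2 * p * p') -
          ((ε' : ℂ) * p' - 1 / 2) * τ / (2 * p * p'))
        (τ / (2 * p * p')) (2 * p' * x) =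
      exp (2 * π * I * ((θ : ℂ) + (1 - (ε : ℂ)) / 2) *
          ((ε' : ℂ) * ((p' : ℂ) / p) - 1 / (2 * p))) *
        exp (-π * I * (ε' : ℂ) * (((p' : ℂ) / p) * r - s + m)) *
        exp (-π * I * ((-r * p' + s * p - p * m : ℤ) : ℂ) / (2 * p * p')) *
        exp (2 * π * I * τ * (2 * (ε' : ℂ) * p' - 1) ^ 2 / (16 * p * p')) *
        exp (2 * π * I * u * (-(ε' : ℂ) * ((p' : ℂ) / p) + 1 / (2 * p))) *
        mordellIntegrand p p' ε r s θ m u τ (x - I * ((ε' : ℂ) / 2 - 1 / (4 * (p' : ℂ)))) := by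
  have hd_sq : exp (π * I / 2 - π * I * p' * ε') ^ 2 = -1 := by
    rw [← exp_nat_mul, show ((2 : ℕ) : ℂ) * (π * I / 2 - π * I * p' * ε') =
      π * I + (-(p' * ε') : ℤ) * (2 * π * I) by push_cast; ring,
      exp_add, exp_int_mul_two_pi_mul_I, exp_pi_mul_I, mul_one]
  have hsinh : sinh (2 * p' * π * (x - I * ((ε' : ℂ) / 2 - 1 / (4 * (p' : ℂ))))) =
      exp (π * I / 2 - π * I * p' * ε') * cosh (π * (2 * p' * x)) := by
    rw [← sinh_add_of_exp_sq_eq_neg_one _ hd_sq]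
    congr 1
    field_simp
    ring
  have hexp := (congrArg exp (mordell_exponent_identity p p' hp hp' ε ε' r s θ m u τ x)).trans
    (exp_sub _ _)
  simp only [exp_add] at hexp
  rw [mordellKernel, mordellIntegrand, hsinh]
  push_cast at hexp ⊢
  linear_combination (cosh (π * (2 * p' * x)))⁻¹ * hexp

lemma integrable_and_mordellH_eq_of_comp_mul {u τ K : ℂ} {c : ℝ} {f : ℝ → ℂ} (hτ : 0 < τ.im)
    (hc : 0 < c) (hK : K ≠ 0) (hf : ∀ x, mordellKernel u τ (c * x) = K * f x) :
    Integrable f ∧ mordellH u τ = c * K * ∫ x, f x := by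
  have hf' : f = fun x => K⁻¹ * mordellKernel u τ (c * x) := by
    ext x
    rw [hf, inv_mul_cancel_left₀ hK]
  refine ⟨hf' ▸ ((integrable_mordellKernel u hτ).comp_mul_left' hc.ne').const_mul _, ?_⟩
  simp only [mordellH_eq_mul_integral_comp_mul u τ hc, hf, integral_const_mul, mul_assoc]

theorem mordell_part_identity_general (p p' : ℤ) (hp : 2 ≤ p) (hp' : 1 ≤ p')
    (ε ε' : ℕ) (r s θ m : ℤ) (u τ : ℂ) (hτ : 0 < τ.im) :
    Integrable (fun x : ℝ =>
      mordellIntegrand p p' ε r s θ m u τ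
        ((x : ℂ) - Complex.I * ((ε' : ℂ) / 2 - 1 / (4 * (p' : ℂ))))) ∧
    mordellH ((u - θ - (1 - (ε : ℂ)) / 2) / p -
        ((-r * p' + s * p - p * m + p * p' : ℤ) : ℂ) / (2 * p * p') -
        ((ε' : ℂ) * p' - 1 / 2) * τ / (2 * p * p'))
      (τ / (2 * p * p')) =
      2 * (p' : ℂ) *
        Complex.exp (2 * (π : ℂ) * Complex.I * ((θ : ℂ) + (1 - (ε : ℂ)) / 2) *
          ((ε' : ℂ) * ((p' : ℂ) / p) - 1 / (2 * p))) *
        Complex.exp (-(π : ℂ) * Complex.I * (ε' : ℂ) * (((p' : ℂ) / p) * r - s + m)) *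
        Complex.exp (-(π : ℂ) * Complex.I * ((-r * p' + s * p - p * m : ℤ) : ℂ) / (2 * p * p')) *
        Complex.exp (2 * (π : ℂ) * Complex.I * τ * (2 * (ε' : ℂ) * p' - 1) ^ 2 / (16 * p * p')) *
        Complex.exp (2 * (π : ℂ) * Complex.I * u * (-(ε' : ℂ) * ((p' : ℂ) / p) + 1 / (2 * p))) *
        ∫ x : ℝ, mordellIntegrand p p' ε r s θ m u τ
          ((x : ℂ) - Complex.I * ((ε' : ℂ) / 2 - 1 / (4 * (p' : ℂ)))) := by
  have hp_pos : (0 : ℝ) < p := by exact_mod_cast (by omega : (0 : ℤ) < p)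
  have hp'_pos : (0 : ℝ) < p' := by exact_mod_cast (by omega : (0 : ℤ) < p')
  have hτ' : 0 < (τ / (2 * p * p')).im := by
    rw [show (2 * p * p' : ℂ) = ((2 * p * p' : ℝ) : ℂ) by push_cast; rfl, div_ofReal_im]
    positivity
  obtain ⟨hint, heq⟩ := integrable_and_mordellH_eq_of_comp_mul hτ' (by positivity : (0 : ℝ) < 2 * p')
    (by simp [exp_ne_zero])
    (mordellKernel_two_mul_eq p p' (by exact_mod_cast hp_pos.ne') (by exact_mod_cast hp'_pos.ne')
      ε ε' r s θ m u τ)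
  refine ⟨hint, heq.trans ?_⟩
  push_cast
  ring

/-- The Mordell part of the continuous contribution of the atypical S-transformation. -/
theorem mordell_part_identity (p p' : ℤ) (hp : 2 ≤ p) (hp' : 1 ≤ p')
    (hco : IsCoprime p p') (ε ε' : ℕ) (hε : ε ≤ 1) (hε' : ε' ≤ 1)
    (r s θ m : ℤ) (hr1 : 1 ≤ r) (hr2 : r ≤ p - 1) (hs1 : 0 ≤ s) (hs2 : s ≤ p' - 1)
    (hm0 : 0 ≤ m) (hm1 : m ≤ 2 * p' - 1) (u τ : ℂ) (hτ : 0 < τ.im) :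
    Integrable (fun x : ℝ =>
      mordellIntegrand p p' ε r s θ m u τ
        ((x : ℂ) - Complex.I * ((ε' : ℂ) / 2 - 1 / (4 * (p' : ℂ))))) ∧
    mordellH ((u - θ - (1 - (ε : ℂ)) / 2) / p -
        ((-r * p' + s * p - p * m + p * p' : ℤ) : ℂ) / (2 * p * p') -
        ((ε' : ℂ) * p' - 1 / 2) * τ / (2 * p * p'))
      (τ / (2 * p * p')) =
      2 * (p' : ℂ) *
        Complex.exp (2 * (π : ℂ) * Complex.I * ((θ : ℂ) + (1 - (ε : ℂ)) / 2) *
          ((ε' : ℂ) * ((p' : ℂ) / p) - 1 / (2 * p))) *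
        Complex.exp (-(π : ℂ) * Complex.I * (ε' : ℂ) * (((p' : ℂ) / p) * r - s + m)) *
        Complex.exp (-(π : ℂ) * Complex.I * ((-r * p' + s * p - p * m : ℤ) : ℂ) / (2 * p * p')) *
        Complex.exp (2 * (π : ℂ) * Complex.I * τ * (2 * (ε' : ℂ) * p' - 1) ^ 2 / (16 * p * p')) *
        Complex.exp (2 * (π : ℂ) * Complex.I * u * (-(ε' : ℂ) * ((p' : ℂ) / p) + 1 / (2 * p))) *
        ∫ x : ℝ, mordellIntegrand p p' ε r s θ m u τ
          ((x : ℂ) - Complex.I * ((ε' : ℂ) / 2 - 1 / (4 * (p' : ℂ)))) :=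
  mordell_part_identity_general p p' hp hp' ε ε' r s θ m u τ hτ

end
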